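/- arXiv:1202.3343 — 11 statements merged into one kernel-verified Lean document; each statement's English description precedes it below -/
import Mathlib

section
/- Let G be a finite group and k a field. Suppose λ : G → k satisfies (a) Σ_{g∈G} λ(g) = 1, (b) λ(g) = Σ_{h∈G} λ(gh⁻¹)λ(h) for all g, and (c) λ(h)λ(g) = λ(hg⁻¹)λ(g) = λ(g⁻¹h)λ(g) for all g,h. Then the support G_λ = {g ∈ G : λ(g) ≠ 0} is a subgroup of G. -/
/-- The support of a partial `k^G`-action on the base field `k`
is a subgroup of `G`. -/
theorem stmt_0 {G : Type*} [Group G] [Fintype G] {k : Type*} [Field k] (l : G → k)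
    (ha : ∑ g : G, l g = 1)
    (hb : ∀ g : G, l g = ∑ h : G, l (g * h⁻¹) * l h)
    (hc : ∀ g h : G, l h * l g = l (h * g⁻¹) * l g ∧ l h * l g = l (g⁻¹ * h) * l g) :
    ∃ H : Subgroup G, ∀ g : G, g ∈ H ↔ l g ≠ 0 := by
  have key : ∀ g h : G, l g ≠ 0 → l h = l (h * g⁻¹) := by
    intro g h hg
    exact mul_right_cancel₀ hg (hc g h).1
  obtain ⟨g0, hg0⟩ : ∃ g : G, l g ≠ 0 := by
    by_contra h
    push_neg at h
    simp [h] at ha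
  have h1 : l 1 ≠ 0 := by
    have := key g0 g0 hg0
    rw [mul_inv_cancel] at this
    rwa [← this]
  refine ⟨{ carrier := setOf (fun g => l g ≠ 0)
            one_mem' := h1
            mul_mem' := ?_
            inv_mem' := ?_ }, fun g => Iff.rfl⟩
  · intro a b ha' hb'
    have := key b (a * b) hb'
    simp only [mul_inv_cancel_right] at this
    show l (a * b) ≠ 0
    rw [this]; exact ha'
  · intro a ha'
    have := key a 1 ha'
    rw [one_mul] at this
    show l a⁻¹ ≠ 0
    rw [← this]; exact h1
end

section
/- Let G be a finite group and k a field with char(k) not dividing |G|. Suppose λ : G → k satisfies the partial k^G-action equations: Σ_g λ(g) = 1, λ(g) = Σ_h λ(gh⁻¹)λ(h), and λ(h)λ(g) = λ(hg⁻¹)λ(g) for all g,h ∈ G. If λ(g) ≠ 0 for every g ∈ G, then λ(g) = 1/|G| for all g ∈ G. -/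
/-- a partial `k^G`-action on `k` with full support is constant `1/|G|`. -/
theorem stmt_2 {G : Type*} [Group G] [Fintype G] {k : Type*} [Field k]
    (hchar : (Fintype.card G : k) ≠ 0) (l : G → k)
    (ha : ∑ g : G, l g = 1)
    (hb : ∀ g : G, l g = ∑ h : G, l (g * h⁻¹) * l h)
    (hc : ∀ g h : G, l h * l g = l (h * g⁻¹) * l g)
    (hfull : ∀ g : G, l g ≠ 0) :
    ∀ g : G, l g = (Fintype.card G : k)⁻¹ := by
  have hconst : ∀ g : G, l g = l 1 := by
    intro g
    have := hc g g
    rw [mul_inv_cancel] at this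
    exact mul_right_cancel₀ (hfull g) this
  intro g
  have hsum : (Fintype.card G : k) * l 1 = 1 := by
    rw [← ha, Finset.sum_congr rfl fun x _ => hconst x]
    simp [mul_comm]
  rw [hconst g]
  field_simp at hsum ⊢
  linear_combination hsum
end

section
/- Let G be a finite group, k a field, and λ : G → k satisfying Σ_g λ(g) = 1 and λ(h)λ(g) = λ(hg⁻¹)λ(g) for all g,h ∈ G. Let H = {g : λ(g) ≠ 0} be the support. Then λ(g) = 1/|H| for every g ∈ H (in particular |H| is invertible in k). -/
/-- on its support H, a partial `k^G`-action on `k` takes the constant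
value `1/|H|`; in particular `|H|` is invertible in `k`. -/
theorem stmt_3 {G : Type*} [Group G] [Fintype G] {k : Type*} [Field k] (l : G → k)
    (ha : ∑ g : G, l g = 1)
    (hc : ∀ g h : G, l h * l g = l (h * g⁻¹) * l g) :
    ∀ g : G, l g ≠ 0 →
      ((Nat.card {x : G // l x ≠ 0} : k) ≠ 0 ∧
        l g = (Nat.card {x : G // l x ≠ 0} : k)⁻¹) := by
  classical
  -- every element of the support takes the value `l 1`
  have hconst : ∀ g : G, l g ≠ 0 → l g = l 1 := by
    intro g hg
    have := hc g g
    rw [mul_inv_cancel] at this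
    exact mul_right_cancel₀ hg this
  have hcard : (Nat.card {x : G // l x ≠ 0} : ℕ)
      = (Finset.univ.filter (fun x : G => l x ≠ 0)).card := by
    simp [Nat.card_eq_fintype_card, Fintype.card_subtype]
  have hsum : ((Nat.card {x : G // l x ≠ 0} : k)) * l 1 = 1 := by
    rw [← ha, hcard]
    rw [← Finset.sum_filter_ne_zero (s := Finset.univ) (f := l)]
    rw [Finset.sum_congr rfl (fun x hx => hconst x (Finset.mem_filter.mp hx).2)]
    rw [Finset.sum_const, nsmul_eq_mul]
  intro g hg
  have h1 : l 1 ≠ 0 := fun h => by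
    rw [h, mul_zero] at hsum; exact one_ne_zero hsum.symm
  have hn : (Nat.card {x : G // l x ≠ 0} : k) ≠ 0 := fun h => by
    rw [h, zero_mul] at hsum; exact one_ne_zero hsum.symm
  refine ⟨hn, ?_⟩
  rw [hconst g hg]
  exact eq_inv_of_mul_eq_one_right hsum
end

section
/- Let G be a group and k a field. Suppose λ : G → k satisfies (1) λ(e) = 1, (2) λ(g) = λ(g)² for all g, and (3) λ(g)λ(h) = λ(g)λ(gh) for all g,h ∈ G. Then the support S = {g : λ(g) ≠ 0} is a subgroup of G and λ(g) = 1 for all g ∈ S. -/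
lemma lam_eq_one {k : Type*} [Field k] {x : k} (h2 : x = x ^ 2) (hx : x ≠ 0) : x = 1 := by
  have : x * x = x * 1 := by rw [mul_one, ← sq, ← h2]
  exact mul_left_cancel₀ hx this

/-- for a partial `kG`-action on `k`, the support is a subgroup and λ
equals 1 on it. -/
theorem stmt_5 {G : Type*} [Group G] {k : Type*} [Field k] (l : G → k)
    (h1 : l 1 = 1)
    (h2 : ∀ g : G, l g = l g ^ 2)
    (h3 : ∀ g h : G, l g * l h = l g * l (g * h)) :
    ∃ H : Subgroup G, (∀ g : G, g ∈ H ↔ l g ≠ 0) ∧ ∀ g : G, l g ≠ 0 → l g = 1 := by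
  have hone : ∀ g, l g ≠ 0 → l g = 1 := fun g hg => lam_eq_one (h2 g) hg
  refine ⟨{ carrier := {g | l g ≠ 0}
            one_mem' := by simp [h1]
            mul_mem' := ?_
            inv_mem' := ?_ }, fun g => Iff.rfl, hone⟩
  · intro a b ha hb
    have := h3 a b
    rw [hone a ha, one_mul, one_mul] at this
    simpa [← this] using hb
  · intro a ha
    have := h3 a a⁻¹
    rw [mul_inv_cancel, h1, mul_one] at this
    intro h
    rw [h, mul_zero] at this
    exact ha this.symm
end

section
/- Conversely, let G be a group and H ≤ G a subgroup; define λ : G → k (k a field) by λ(g) = 1 if g ∈ H and λ(g) = 0 otherwise. Then λ satisfies λ(e) = 1, λ(g) = λ(g)², and λ(g)λ(h) = λ(g)λ(gh) for all g,h ∈ G. Hence partial kG-actions on k correspond bijectively to subgroups of G. -/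
open Classical

section Aux
variable {G : Type*} [Group G] {k : Type*} [Field k]

lemma aux_ind (H : Subgroup G) :
    (if (1 : G) ∈ H then (1 : k) else 0) = 1 ∧
    (∀ g : G, (if g ∈ H then (1 : k) else 0) = (if g ∈ H then (1 : k) else 0) ^ 2) ∧
    (∀ g h : G, (if g ∈ H then (1 : k) else 0) * (if h ∈ H then (1 : k) else 0)
        = (if g ∈ H then (1 : k) else 0) * (if g * h ∈ H then (1 : k) else 0)) := by
  refine ⟨by simp [H.one_mem], fun g => by by_cases hg : g ∈ H <;> simp [hg], fun g h => ?_⟩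
  by_cases hg : g ∈ H
  · by_cases hh : h ∈ H
    · simp [hg, hh, H.mul_mem hg hh]
    · have : g * h ∉ H := fun hm => hh (by simpa using H.mul_mem (H.inv_mem hg) hm)
      simp [hg, hh, this]
  · simp [hg]

lemma aux_zero_or_one {l : G → k} (h2 : ∀ g : G, l g = l g ^ 2) (g : G) :
    l g = 0 ∨ l g = 1 := by
  have := h2 g
  have : l g * (l g - 1) = 0 := by ring_nf; linear_combination -this
  rcases mul_eq_zero.1 this with h | h
  · exact Or.inl h
  · exact Or.inr (sub_eq_zero.1 h)

noncomputable def auxEquiv (G : Type*) [Group G] (k : Type*) [Field k] :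
    Subgroup G ≃
      {l : G → k // l 1 = 1 ∧ (∀ g : G, l g = l g ^ 2) ∧
        ∀ g h : G, l g * l h = l g * l (g * h)} where
  toFun H := ⟨fun g => if g ∈ H then 1 else 0, aux_ind H⟩
  invFun l :=
    { carrier := {g | l.1 g = 1}
      one_mem' := l.2.1
      mul_mem' := by
        intro a b ha hb
        have := l.2.2.2 a b
        simp only [Set.mem_setOf_eq] at ha hb ⊢
        rw [ha, hb, one_mul, one_mul] at this
        exact this.symm
      inv_mem' := by
        intro a ha
        have := l.2.2.2 a a⁻¹
        simp only [Set.mem_setOf_eq] at ha ⊢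
        rw [ha, one_mul, one_mul, mul_inv_cancel, l.2.1] at this
        exact this }
  left_inv H := by
    ext g
    simp only [Subgroup.mem_mk, Set.mem_setOf_eq]
    by_cases hg : g ∈ H <;> simp [hg]
  right_inv l := by
    ext g
    simp only [Subgroup.mem_mk, Set.mem_setOf_eq]
    rcases aux_zero_or_one l.2.2.1 g with h | h <;> simp [h]

end Aux

open Classical in
/-- the indicator function of a subgroup satisfies the partial
`kG`-action equations on `k`, and partial `kG`-actions on `k` correspond
bijectively to subgroups of `G`. -/
theorem stmt_6 {G : Type*} [Group G] {k : Type*} [Field k] :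
    (∀ H : Subgroup G,
      (if (1 : G) ∈ H then (1 : k) else 0) = 1 ∧
      (∀ g : G, (if g ∈ H then (1 : k) else 0) = (if g ∈ H then (1 : k) else 0) ^ 2) ∧
      (∀ g h : G, (if g ∈ H then (1 : k) else 0) * (if h ∈ H then (1 : k) else 0)
          = (if g ∈ H then (1 : k) else 0) * (if g * h ∈ H then (1 : k) else 0))) ∧
    ∃ F : Subgroup G ≃
        {l : G → k // l 1 = 1 ∧ (∀ g : G, l g = l g ^ 2) ∧
          ∀ g h : G, l g * l h = l g * l (g * h)},
      ∀ (H : Subgroup G) (g : G), (F H : G → k) g = if g ∈ H then 1 else 0 := by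
  exact ⟨aux_ind, auxEquiv G k, fun H g => rfl⟩
end

section
/- Let k be a field with char(k) ≠ 2 and let H₄ be the Sweedler 4-dimensional Hopf algebra with basis e₁=(1+g)/2, e₂=(1-g)/2, h₁=xe₁, h₂=xe₂. Suppose scalars λ_{e₁}, λ_{e₂}, λ_{h₁}, λ_{h₂} ∈ k satisfy: λ_{e₁}+λ_{e₂}=1, λ_{e₁}=λ_{e₁}²+λ_{e₂}², λ_{e₂}=2λ_{e₁}λ_{e₂}, λ_{h₁}=2λ_{e₁}λ_{h₁}, λ_{h₂}=2λ_{e₁}λ_{h₂}, and λ_{h₁}λ_{e₁}=2λ_{h₁}λ_{e₁}. Then either (λ_{e₁},λ_{e₂},λ_{h₁},λ_{h₂}) = (1,0,0,0), or λ_{e₁}=λ_{e₂}=1/2 and λ_{h₁}=0 with λ_{h₂} arbitrary. -/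
/-- classification of partial actions of the Sweedler Hopf algebra H₄
on the base field k, char k ≠ 2: the scalars λ_{e₁}, λ_{e₂}, λ_{h₁}, λ_{h₂} are
either (1,0,0,0) (the global action by ε) or (1/2, 1/2, 0, arbitrary). -/
theorem stmt_7 {k : Type*} [Field k] (hchar : (2 : k) ≠ 0)
    (le1 le2 lh1 lh2 : k)
    (eq1 : le1 + le2 = 1)
    (eq2 : le1 = le1 ^ 2 + le2 ^ 2)
    (eq3 : le2 = 2 * le1 * le2)
    (eq4 : lh1 = 2 * le1 * lh1)
    (eq5 : lh2 = 2 * le1 * lh2)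
    (eq6 : lh1 * le1 = 2 * (lh1 * le1)) :
    (le1 = 1 ∧ le2 = 0 ∧ lh1 = 0 ∧ lh2 = 0) ∨
    (le1 = 1 / 2 ∧ le2 = 1 / 2 ∧ lh1 = 0) := by
  by_cases h2 : le2 = 0
  · left
    have h1 : le1 = 1 := by linear_combination eq1 - h2
    rw [h1] at eq4 eq5
    exact ⟨h1, h2, by linear_combination -eq4, by linear_combination -eq5⟩
  · right
    have h : 2 * le1 - 1 = 0 := by
      have hz : le2 * (2 * le1 - 1) = 0 := by linear_combination -eq3
      rcases mul_eq_zero.mp hz with h | h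
      · exact absurd h h2
      · exact h
    have h1 : le1 = 1 / 2 := by
      rw [eq_div_iff hchar]; linear_combination h
    have hl2 : le2 = 1 / 2 := by
      rw [eq_div_iff hchar]; linear_combination 2 * eq1 - h
    have hh1 : lh1 = 0 := by
      have h6 : lh1 * le1 = 0 := by linear_combination -eq6
      rw [h1] at h6
      field_simp at h6
      linear_combination h6
    exact ⟨h1, hl2, hh1⟩
end

section
/- Let H be a Hopf algebra over a field k and A a k-algebra with a linear map · : H ⊗ A → A satisfying: 1_H·a = a; h·(ab) = Σ (h₍₁₎·a)(h₍₂₎·b); and h·(k·a) = Σ (h₍₁₎·1_A)((h₍₂₎k)·a) (a partial H-module algebra). Then the identity h·(b(k·a)) = Σ (h₍₁₎·b)((h₍₂₎k)·a) holds for all h,k ∈ H and a,b ∈ A. -/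
open TensorProduct

/-- The "Sweedler sum" Σ f(h₍₁₎) * g(h₍₂₎), as a linear map on H ⊗ H to be evaluated
at comul h. -/
noncomputable def sw (k : Type*) {H A : Type*} [Field k]
    [AddCommGroup H] [Module k H] [Ring A] [Algebra k A]
    (f g : H →ₗ[k] A) : H ⊗[k] H →ₗ[k] A :=
  TensorProduct.lift ((LinearMap.mul k A).compl₁₂ f g)

theorem sw_tmul (k : Type*) {H A : Type*} [Field k]
    [AddCommGroup H] [Module k H] [Ring A] [Algebra k A]
    (f g : H →ₗ[k] A) (x y : H) : sw k f g (x ⊗ₜ y) = f x * g y := rfl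

/-- in a partial H-module algebra, h·(b(k·a)) = Σ (h₁·b)((h₂k)·a). -/
theorem stmt_8 {k H A : Type*} [Field k] [Ring H] [HopfAlgebra k H]
    [Ring A] [Algebra k A]
    (act : H →ₗ[k] A →ₗ[k] A)
    (h1 : ∀ a : A, act 1 a = a)
    (h2 : ∀ (h : H) (a b : A),
      act h (a * b) = sw k (act.flip a) (act.flip b) (Coalgebra.comul (R := k) h))
    (h3 : ∀ (h g : H) (a : A),
      act h (act g a) = sw k (act.flip 1) (act.flip a ∘ₗ LinearMap.mulRight k g)
        (Coalgebra.comul (R := k) h)) :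
    ∀ (h g : H) (a b : A),
      act h (b * act g a) = sw k (act.flip b) (act.flip a ∘ₗ LinearMap.mulRight k g)
        (Coalgebra.comul (R := k) h) := by
  intro h g a b
  set f1 : H →ₗ[k] A := act.flip b
  set fo : H →ₗ[k] A := act.flip (1 : A)
  set f2 : H →ₗ[k] A := act.flip a ∘ₗ LinearMap.mulRight k g
  -- triple sum maps
  set T : H ⊗[k] (H ⊗[k] H) →ₗ[k] A :=
    TensorProduct.lift ((LinearMap.mul k A).compl₁₂ f1 (sw k fo f2)) with hT
  set T' : (H ⊗[k] H) ⊗[k] H →ₗ[k] A :=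
    TensorProduct.lift ((LinearMap.mul k A).compl₁₂ (sw k f1 fo) f2) with hT'
  have keyA : ∀ t : H ⊗[k] H, sw k f1 (act.flip (act g a)) t
      = T ((Coalgebra.comul (R := k)).lTensor H t) := by
    intro t
    induction t with
    | zero => simp
    | add x y hx hy => simp [hx, hy]
    | tmul x y =>
        simp only [LinearMap.lTensor_tmul, hT, sw_tmul, TensorProduct.lift.tmul]
        simp only [LinearMap.compl₁₂_apply, LinearMap.mul_apply', LinearMap.flip_apply]
        rw [h3 y g a]
  have keyB : ∀ t : H ⊗[k] H, sw k f1 f2 t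
      = T' ((Coalgebra.comul (R := k)).rTensor H t) := by
    intro t
    induction t with
    | zero => simp
    | add x y hx hy => simp [hx, hy]
    | tmul x y =>
        simp only [LinearMap.rTensor_tmul, hT', sw_tmul, TensorProduct.lift.tmul]
        simp only [LinearMap.compl₁₂_apply, LinearMap.mul_apply', LinearMap.flip_apply]
        have : act x b = sw k f1 fo (Coalgebra.comul (R := k) x) := by
          have := h2 x b 1
          rwa [mul_one] at this
        rw [← this]; rfl
  have keyC : T ∘ₗ (TensorProduct.assoc k H H H).toLinearMap = T' := by
    ext x y z
    simp only [LinearMap.comp_apply, LinearMap.coe_comp, Function.comp_apply,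
      AlgebraTensorModule.curry_apply, TensorProduct.curry_apply,
      LinearMap.coe_restrictScalars, LinearEquiv.coe_coe, TensorProduct.assoc_tmul,
      hT, hT', TensorProduct.lift.tmul, LinearMap.compl₁₂_apply, LinearMap.mul_apply',
      sw_tmul]
    rw [mul_assoc]
  calc act h (b * act g a)
      = sw k f1 (act.flip (act g a)) (Coalgebra.comul (R := k) h) := h2 h b (act g a)
    _ = T ((Coalgebra.comul (R := k)).lTensor H (Coalgebra.comul (R := k) h)) :=
        keyA _
    _ = T ((TensorProduct.assoc k H H H)
          ((Coalgebra.comul (R := k)).rTensor H (Coalgebra.comul (R := k) h))) := by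
        rw [Coalgebra.coassoc_apply]
    _ = T' ((Coalgebra.comul (R := k)).rTensor H (Coalgebra.comul (R := k) h)) := by
        rw [← keyC]; rfl
    _ = sw k f1 f2 (Coalgebra.comul (R := k) h) := (keyB _).symm
end

section
/- Let H be a Hopf algebra and A an H-module algebra with a central idempotent e ∈ A. Define on the ideal I = eA the map h · f := e(h ▷ f) for h ∈ H, f ∈ I, where ▷ is the global action. Then I with this operation is a symmetric partial H-module algebra: 1_H·f = f, h·(fg) = Σ(h₍₁₎·f)(h₍₂₎·g), and h·(k·f) = Σ(h₍₁₎·e)((h₍₂₎k)·f) = Σ((h₍₁₎k)·f)(h₍₂₎·e). -/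
open TensorProduct

/-- if A is an H-module algebra and e ∈ A a central idempotent, then the
induced operation h·f := e(h▷f) makes the ideal I = eA (elements f with ef = f) a
symmetric partial H-module algebra. -/
theorem stmt_9 {k H A : Type*} [Field k] [Ring H] [HopfAlgebra k H]
    [Ring A] [Algebra k A]
    (act : H →ₗ[k] A →ₗ[k] A)
    (g1 : ∀ a : A, act 1 a = a)
    (g2 : ∀ (h h' : H) (a : A), act (h * h') a = act h (act h' a))
    (g3 : ∀ (h : H) (a b : A),
      act h (a * b) = sw k (act.flip a) (act.flip b) (Coalgebra.comul (R := k) h))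
    (g4 : ∀ h : H, act h 1 = Coalgebra.counit (R := k) h • (1 : A))
    (e : A) (he : IsIdempotentElem e) (hcent : ∀ a : A, e * a = a * e)
    (pact : H →ₗ[k] A →ₗ[k] A)
    (hpact : pact = (LinearMap.llcomp k A A A (LinearMap.mulLeft k e)).comp act) :
    (∀ f : A, e * f = f → pact 1 f = f) ∧
    (∀ (h : H) (f g : A), e * f = f → e * g = g →
      pact h (f * g) = sw k (pact.flip f) (pact.flip g) (Coalgebra.comul (R := k) h)) ∧
    (∀ (h g : H) (f : A), e * f = f →
      pact h (pact g f) = sw k (pact.flip e) (pact.flip f ∘ₗ LinearMap.mulRight k g)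
        (Coalgebra.comul (R := k) h) ∧
      pact h (pact g f) = sw k (pact.flip f ∘ₗ LinearMap.mulRight k g) (pact.flip e)
        (Coalgebra.comul (R := k) h)) := by
  have hp : ∀ (h : H) (a : A), pact h a = e * act h a := by
    intro h a; rw [hpact]; rfl
  -- idempotent absorption: (e * u) * (e * v) = e * (u * v)
  have habs : ∀ u v : A, (e * u) * (e * v) = e * (u * v) := by
    intro u v
    rw [mul_assoc, ← mul_assoc u e v, ← hcent u, ← mul_assoc, ← mul_assoc,
      he.eq, mul_assoc]
  have key : ∀ a b : A, sw k (pact.flip a) (pact.flip b)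
      = (LinearMap.mulLeft k e) ∘ₗ sw k (act.flip a) (act.flip b) := by
    intro a b
    apply TensorProduct.ext'
    intro x y
    simp only [sw, LinearMap.comp_apply, TensorProduct.lift.tmul,
      LinearMap.compl₁₂_apply, LinearMap.mul_apply', LinearMap.flip_apply,
      LinearMap.mulLeft_apply, hp]
    exact habs _ _
  refine ⟨?_, ?_, ?_⟩
  · intro f hf
    rw [hp, g1, hf]
  · intro h f g hf hg
    rw [hp, g3, key]
    rfl
  · intro h g f _
    have hcomp : pact.flip f ∘ₗ LinearMap.mulRight k g = pact.flip (act g f) := by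
      ext x
      simp only [LinearMap.comp_apply, LinearMap.mulRight_apply, LinearMap.flip_apply,
        hp, g2]
    have h1 : pact h (pact g f) = e * act h (e * act g f) := by
      rw [hp, hp]
    constructor
    · rw [h1, hcomp, g3, key]
      rfl
    · rw [h1, hcomp, hcent (act g f), g3, key]
      rfl
end

section
/- Let G be a group and A a unital algebra with a partial kG-action (axioms as for partial H-module algebras evaluated at group elements). Define I_g := e_g A where e_g = g·1_A, and α_g : I_{g⁻¹} → I_g by α_g(f) = g·f. Then: (i) α_e = id_A and I_e = A; (ii) α_{h⁻¹}(I_h ∩ I_{g⁻¹}) ⊆ I_{(gh)⁻¹}; (iii) α_g(α_h(f)) = α_{gh}(f) for all f ∈ α_{h⁻¹}(I_h ∩ I_{g⁻¹}). That is, ({I_g}, {α_g}) is a partial action of G on A in the sense of Dokuchaev–Exel. -/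
/-- a partial `kG`-action on a unital algebra A yields a partial action
of G on A in the sense of Dokuchaev–Exel, with ideals I_g = (g·1)A and maps
α_g(f) = g·f : I_{g⁻¹} → I_g. -/
theorem stmt_14 {G : Type*} [Group G] {k : Type*} [Field k]
    {A : Type*} [Ring A] [Algebra k A]
    (act : G → A → A)
    (h1 : ∀ a : A, act 1 a = a)
    (h2 : ∀ (g : G) (a b : A), act g (a * b) = act g a * act g b)
    (h3 : ∀ (g h : G) (a : A),
      act g (act h a) = act g 1 * act (g * h) a ∧
      act g (act h a) = act (g * h) a * act g 1) :
    ∀ I : G → Set A, (∀ g : G, I g = Set.range (fun a => act g 1 * a)) →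
    (I 1 = Set.univ ∧ (∀ a : A, act 1 a = a)) ∧
    (∀ g : G, act g '' I g⁻¹ ⊆ I g) ∧
    (∀ g h : G, act h⁻¹ '' (I h ∩ I g⁻¹) ⊆ I (g * h)⁻¹) ∧
    (∀ g h : G, ∀ f ∈ act h⁻¹ '' (I h ∩ I g⁻¹), act g (act h f) = act (g * h) f) := by
  intro I hI
  -- e_g is idempotent
  have hidem : ∀ g : G, act g 1 * act g 1 = act g 1 := by
    intro g; rw [← h2, one_mul]
  -- e_g is central
  have hcen : ∀ (g : G) (a : A), act g 1 * a = a * act g 1 := by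
    intro g a
    have h := h3 g g⁻¹ a
    rw [mul_inv_cancel, h1] at h
    exact h.1.symm.trans h.2
  -- membership criterion
  have hmem : ∀ (g : G) (x : A), x ∈ I g ↔ act g 1 * x = x := by
    intro g x
    rw [hI g]
    constructor
    · rintro ⟨a, rfl⟩
      simp only [← mul_assoc, hidem]
    · intro hx
      exact ⟨x, hx⟩
  have key : ∀ (g w : G), act g (act w 1) = act g 1 * act (g * w) 1 := by
    intro g w; exact (h3 g w 1).1
  refine ⟨⟨?_, h1⟩, ?_, ?_, ?_⟩
  · ext x
    simp only [Set.mem_univ, iff_true, hmem, h1, one_mul]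
  · rintro g x ⟨y, hy, rfl⟩
    rw [hmem] at hy ⊢
    conv_rhs => rw [← hy, h2, key, mul_inv_cancel, h1, mul_one]
  · rintro g h x ⟨y, ⟨hy1, hy2⟩, rfl⟩
    rw [hmem] at hy1 hy2 ⊢
    have hz : act h⁻¹ y = act h⁻¹ 1 * act (g * h)⁻¹ 1 * act h⁻¹ y := by
      conv_lhs => rw [← hy2, h2, key, ← mul_inv_rev]
    rw [hz, ← mul_assoc, ← hcen, ← mul_assoc, hidem]
  · rintro g h x ⟨y, ⟨hy1, hy2⟩, rfl⟩
    rw [hmem] at hy1 hy2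
    have e1 : act h (act h⁻¹ y) = y := by
      rw [(h3 h h⁻¹ y).1, mul_inv_cancel, h1, hy1]
    have e2 : act (g * h) 1 * act g y = act g y := by
      have hz : act g y = act g 1 * act (g * h) 1 * act g y := by
        conv_lhs => rw [← hy1, h2, key]
      rw [hz, ← mul_assoc, ← hcen, ← mul_assoc, hidem]
    have e3 : act (g * h) (act h⁻¹ y) = act (g * h) 1 * act g y := by
      have := (h3 (g * h) h⁻¹ y).1
      rwa [mul_inv_cancel_right] at this
    rw [e1, e3, e2]
end

section
/- Let G be a finite group, k a field with char(k) ∤ |G|, and H ≤ G a subgroup. Inside the group algebra kG, the element e_H = (1/|H|) Σ_{h∈H} h is an idempotent, and the k^G-submodule of kG generated by e_H under the action p_g ▷ (Σ a_s δ_s) = a_g δ_g is the subalgebra kH ⊆ kG. (The globalization of the partial k^G-action on k determined by H is kH.) -/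
/-- in kG (G finite, char k ∤ |G|), e_H = (1/|H|) Σ_{h∈H} h is an
idempotent; the canonical k^G-action p_g ▷ x = x(g)δ_g sends e_H to (1/|H|)δ_g
for g ∈ H and to 0 otherwise, and the k^G-submodule generated by e_H is kH. -/
theorem stmt_17 {G : Type*} [Group G] [Fintype G] [DecidableEq G]
    {k : Type*} [Field k] (hchar : (Fintype.card G : k) ≠ 0)
    (H : Subgroup G) [DecidablePred (· ∈ H)]
    (eH : MonoidAlgebra k G)
    (heH : eH = (Nat.card H : k)⁻¹ •
      ∑ g ∈ Finset.univ.filter (· ∈ H), MonoidAlgebra.single g (1 : k))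
    (proj : G → MonoidAlgebra k G → MonoidAlgebra k G)
    (hproj : ∀ (g : G) (x : MonoidAlgebra k G), proj g x = MonoidAlgebra.single g (x.coeff g)) :
    IsIdempotentElem eH ∧
    (∀ g : G, proj g eH =
      if g ∈ H then (Nat.card H : k)⁻¹ • MonoidAlgebra.single g (1 : k) else 0) ∧
    Submodule.span k (Set.range fun g => proj g eH) =
      Submodule.span k ((fun g => MonoidAlgebra.single g (1 : k)) '' (H : Set G)) := by
  set c : k := (Nat.card H : k)⁻¹ with hc
  set S : Finset G := Finset.univ.filter (· ∈ H) with hS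
  have hcardS : S.card = Nat.card H := by
    rw [Nat.card_eq_fintype_card, Fintype.card_subtype]
  have hHne : (Nat.card H : k) ≠ 0 := by
    intro h0
    obtain ⟨m, hm⟩ := Subgroup.card_subgroup_dvd_card H
    apply hchar
    rw [Nat.card_eq_fintype_card] at hm
    rw [hm, Nat.cast_mul, h0, zero_mul]
  have hcinv : c * (Nat.card H : k) = 1 := inv_mul_cancel₀ hHne
  have heval : ∀ g : G, eH.coeff g = if g ∈ H then c else 0 := by
    intro g
    rw [heH, MonoidAlgebra.coeff_smul_apply, MonoidAlgebra.coeff_sum, Finsupp.finset_sum_apply]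
    simp [S, MonoidAlgebra.coeff_single, Finsupp.single_apply, Finset.sum_ite_eq, mul_ite]
  have hproj' : ∀ g : G, proj g eH =
      if g ∈ H then c • MonoidAlgebra.single g (1 : k) else 0 := by
    intro g
    rw [hproj, heval]
    split
    · rw [MonoidAlgebra.smul_single', mul_one]
    · exact MonoidAlgebra.single_zero g
  refine ⟨?_, hproj', ?_⟩
  · -- idempotent
    unfold IsIdempotentElem
    rw [heH, smul_mul_smul_comm, Finset.sum_mul_sum]
    have hsum : ∀ a ∈ S, ∑ b ∈ S,
        MonoidAlgebra.single a (1:k) * MonoidAlgebra.single b (1:k)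
        = ∑ s ∈ S, MonoidAlgebra.single s (1:k) := by
      intro a ha
      simp only [MonoidAlgebra.single_mul_single, one_mul]
      have haH : a ∈ H := by simpa [S] using ha
      refine Finset.sum_nbij' (fun b => a * b) (fun s => a⁻¹ * s) ?_ ?_ ?_ ?_ ?_
      · intro b hb; simp only [S, Finset.mem_filter, Finset.mem_univ, true_and] at *
        exact H.mul_mem haH hb
      · intro s hs; simp only [S, Finset.mem_filter, Finset.mem_univ, true_and] at *
        exact H.mul_mem (H.inv_mem haH) hs
      · intro b _; group
      · intro s _; group
      · intro b _; rfl
    rw [Finset.sum_congr rfl hsum, Finset.sum_const, hcardS,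
      ← Nat.cast_smul_eq_nsmul k, smul_smul]
    congr 1
    rw [mul_assoc, hcinv, mul_one]
  · -- spans
    apply le_antisymm
    · rw [Submodule.span_le]
      rintro _ ⟨g, rfl⟩
      simp only [SetLike.mem_coe]
      rw [hproj' g]
      split
      · next hg =>
        exact Submodule.smul_mem _ c (Submodule.subset_span ⟨g, hg, rfl⟩)
      · exact (Submodule.span k _).zero_mem
    · rw [Submodule.span_le]
      rintro _ ⟨g, hg, rfl⟩
      have hgH : g ∈ H := hg
      simp only [SetLike.mem_coe]
      have : MonoidAlgebra.single g (1:k) = (Nat.card H : k) • proj g eH := by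
        rw [hproj' g, if_pos hgH, smul_smul, mul_comm, hcinv, one_smul]
      show MonoidAlgebra.single g (1:k) ∈ _
      rw [this]
      exact Submodule.smul_mem _ _ (Submodule.subset_span ⟨g, rfl⟩)
end

section
/- Let G be a finite group and k a field. Suppose λ : G → k defines a partial k^G-action on k (axioms (a'),(b'),(c')), with support subgroup G_λ, and let π : G → k satisfy Σ_g π(g) = 1 and π(s)π(t) = λ(st⁻¹)π(t) = λ(t⁻¹s)π(t) for all s,t ∈ G (describing the action on a one-dimensional morphism space with equal source/target lambda, i.e. λ^x = λ^y = λ). If π(t) ≠ 0, then {h ∈ G : π(h) ≠ 0} = t·G_λ, and π(h) = λ(e) = 1/|G_λ| for every h in this coset. -/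
/-- for a partial `k^G`-action λ on `k` with support subgroup G_λ and
scalars π describing the action on a one-dimensional Hom-space, if π(t) ≠ 0 then the
support of π is the coset t·G_λ and π takes the constant value λ(e) = 1/|G_λ| there. -/
theorem stmt_18 {G : Type*} [Group G] [Fintype G] {k : Type*} [Field k]
    (l p : G → k)
    (ha : ∑ g : G, l g = 1)
    (hb : ∀ g : G, l g = ∑ h : G, l (g * h⁻¹) * l h)
    (hc : ∀ g h : G, l h * l g = l (h * g⁻¹) * l g ∧ l h * l g = l (g⁻¹ * h) * l g)
    (hp1 : ∑ g : G, p g = 1)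
    (hp2 : ∀ s t : G, p s * p t = l (s * t⁻¹) * p t ∧ p s * p t = l (t⁻¹ * s) * p t)
    (t : G) (ht : p t ≠ 0) :
    (∀ h : G, p h ≠ 0 ↔ ∃ s : G, l s ≠ 0 ∧ h = t * s) ∧
    (∀ h : G, p h ≠ 0 →
      p h = l 1 ∧ l 1 = (Nat.card {g : G // l g ≠ 0} : k)⁻¹) := by
  classical
  have hconst : ∀ g : G, l g ≠ 0 → l g = l 1 := by
    intro g hg
    have h := (hc g g).1
    rw [mul_inv_cancel] at h
    exact mul_right_cancel₀ hg h
  have hph : ∀ h : G, p h = l (t⁻¹ * h) := fun h =>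
    mul_right_cancel₀ ht (hp2 h t).2
  have hcard : (Nat.card {g : G // l g ≠ 0} : ℕ) =
      (Finset.univ.filter (fun g : G => l g ≠ 0)).card := by
    rw [Nat.card_eq_fintype_card, Fintype.card_subtype]
  have hsum : ((Finset.univ.filter (fun g : G => l g ≠ 0)).card : k) * l 1 = 1 := by
    rw [← ha, ← Finset.sum_filter_ne_zero Finset.univ]
    rw [Finset.sum_congr rfl (fun g hg => hconst g (Finset.mem_filter.mp hg).2)]
    rw [Finset.sum_const, nsmul_eq_mul]
  have hl1 : l 1 = ((Nat.card {g : G // l g ≠ 0} : ℕ) : k)⁻¹ := by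
    rw [hcard]
    exact eq_inv_of_mul_eq_one_right hsum
  constructor
  · intro h
    constructor
    · intro hh
      refine ⟨t⁻¹ * h, ?_, by group⟩
      rw [hph h] at hh; exact hh
    · rintro ⟨s, hs, rfl⟩
      rw [hph, inv_mul_cancel_left]
      exact hs
  · intro h hh
    rw [hph h] at hh ⊢
    exact ⟨hconst _ hh, hl1⟩
end
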